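/- Let G be a connected graph on n vertices with no induced cycle of length at least k, with maximum degree at most εn, where ε and δ are small enough in terms of k (e.g. kε ≤ δ and δ < 1/100). Then G contains two disjoint vertex sets X, Y, each of size at least cn for some c = c(k, ε) > 0, with no edges between X and Y, provided n is sufficiently large. -/

import Mathlib

/-!
Grow an induced path `p 0, …, p m` greedily, keeping a reservoir `C`: a set of vertices, not
dominated by `p 0, …, p (m - 1)`, that is connected together with the last vertex `p m`.
The vertices of `C` not adjacent to `p m` either split into two anticomplete parts of size at
least `t`, or one component `C'` of them has at least `t` vertices. The other vertices are
given up on (if there are ever `t` of them, they form an empty pair with `C'`), and the path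
is extended by a neighbour of `p m` adjacent to `C'`. This ends with an induced path whose
closed neighbourhood misses at most `4t` vertices.

Along such a path let `a` be the first index at which the neighbourhood of `p 0, …, p a`
covers half of the vertices. Degrees are small, so the neighbourhoods of the `k - 2` following
path vertices are small, and removing them leaves two large sets: what `p 0, …, p a` dominates
and what only the path after this window dominates. An edge between them would close, through
the path, a hole of length at least `k`.
-/

open Finset

lemma exists_consecutive_straddling {P : ℕ → Prop} [DecidablePred P] {i j a : ℕ} (hi : P i)
    (hia : i ≤ a) (hj : P j) (haj : a < j) :
    ∃ i' j', i' ≤ a ∧ a < j' ∧ j' ≤ j ∧ P i' ∧ P j' ∧ ∀ l, i' < l → l < j' → ¬P l := by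
  have hex : ∃ l, a < l ∧ P l := ⟨j, haj, hj⟩
  refine ⟨Nat.findGreatest P a, Nat.find hex, Nat.findGreatest_le a, (Nat.find_spec hex).1,
    Nat.find_min' hex ⟨haj, hj⟩, Nat.findGreatest_spec hia hi, (Nat.find_spec hex).2,
    fun l hl hl' hP => ?_⟩
  rcases le_or_gt l a with hla | hla
  · exact absurd (Nat.le_findGreatest hla hP) (not_le.2 hl)
  · exact Nat.find_min hex hl' ⟨hla, hP⟩

namespace SimpleGraph

variable {V : Type*}

section Cuts

variable (G : SimpleGraph V)

def Anticomplete (A B : Finset V) : Prop := ∀ a ∈ A, ∀ b ∈ B, ¬G.Adj a b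

def HasEmptyBipartitePair (ℓ : ℕ) : Prop :=
  ∃ X Y : Finset V, Disjoint X Y ∧ ℓ ≤ #X ∧ ℓ ≤ #Y ∧ G.Anticomplete X Y

-- `G[T]` is preconnected, phrased through cuts.
def PreconnectedOn [DecidableEq V] (T : Finset V) : Prop :=
  ∀ A ⊆ T, G.Anticomplete A (T \ A) → A = ∅ ∨ A = T

variable {G} {A A' B B' S T : Finset V} {t : ℕ}

lemma Anticomplete.symm (h : G.Anticomplete A B) : G.Anticomplete B A :=
  fun b hb a ha hab => h a ha b hb hab.symm

lemma Anticomplete.mono (h : G.Anticomplete A B) (hA : A' ⊆ A) (hB : B' ⊆ B) :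
    G.Anticomplete A' B' :=
  fun a ha b hb => h a (hA ha) b (hB hb)

variable [DecidableEq V]

lemma Anticomplete.union_left (h : G.Anticomplete A B) (h' : G.Anticomplete A' B) :
    G.Anticomplete (A ∪ A') B := by
  intro a ha
  rcases mem_union.1 ha with ha | ha
  exacts [h a ha, h' a ha]

lemma PreconnectedOn.exists_adj (hT : G.PreconnectedOn T) (hAT : A ⊆ T) (hA : A.Nonempty)
    {b : V} (hbT : b ∈ T) (hbA : b ∉ A) : ∃ a ∈ A, ∃ c ∈ T, c ∉ A ∧ G.Adj a c := by
  by_contra! h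
  rcases hT A hAT fun a ha c hc => h a ha c (mem_sdiff.1 hc).1 (mem_sdiff.1 hc).2 with h | h
  · simp [h] at hA
  · exact hbA (h ▸ hbT)

lemma Connected.preconnectedOn_univ [Fintype V] (hG : G.Connected) : G.PreconnectedOn univ := by
  intro A _ hA
  by_contra! hne
  obtain ⟨a, ha⟩ := hne.1
  obtain ⟨b, -, hb⟩ := exists_of_ssubset (ssubset_univ_iff.2 hne.2)
  obtain ⟨d, -, hd, hd'⟩ := (hG a b).some.exists_boundary_dart (A : Set V) ha hb
  exact hA _ hd _ (by simpa using hd') d.adj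

lemma PreconnectedOn.insert_of_adj (hT : G.PreconnectedOn T) {a w : V} (ha : a ∈ T)
    (hw : G.Adj w a) : G.PreconnectedOn (insert w T) := by
  intro A hA hcut
  have hAT : G.Anticomplete (A ∩ T) (T \ (A ∩ T)) :=
    hcut.mono inter_subset_left fun c hc => by
      simp only [mem_sdiff, mem_inter, not_and] at hc ⊢
      exact ⟨mem_insert_of_mem hc.1, fun h => hc.2 h hc.1⟩
  have hwa : w ∈ A ↔ a ∈ A := by
    constructor <;> intro hx <;> by_contra hy
    · exact hcut w hx a (mem_sdiff.2 ⟨mem_insert_of_mem ha, hy⟩) hw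
    · exact hcut a hx w (mem_sdiff.2 ⟨mem_insert_self _ _, hy⟩) hw.symm
  rcases hT (A ∩ T) inter_subset_right hAT with h | h
  · refine Or.inl (eq_empty_of_forall_notMem fun x hx => ?_)
    rcases mem_insert.1 (hA hx) with rfl | hxT
    · exact eq_empty_iff_forall_notMem.1 h a (mem_inter.2 ⟨hwa.1 hx, ha⟩)
    · exact eq_empty_iff_forall_notMem.1 h x (mem_inter.2 ⟨hx, hxT⟩)
  · have hTA : T ⊆ A := inter_eq_right.1 h
    exact Or.inr (subset_antisymm hA (insert_subset (hwa.2 (hTA ha)) hTA))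

lemma PreconnectedOn.exists_adj_of_anticomplete [DecidableRel G.Adj] {q : V} {C C' : Finset V}
    (hC : G.PreconnectedOn (insert q C)) (hq : q ∉ C) (hC'S : C' ⊆ C.filter fun v => ¬G.Adj q v)
    (hC' : C'.Nonempty) (hcut : G.Anticomplete C' ((C.filter fun v => ¬G.Adj q v) \ C')) :
    ∃ a ∈ C', ∃ w ∈ C, w ∉ C' ∧ G.Adj a w ∧ G.Adj q w := by
  have hC'C : C' ⊆ C := hC'S.trans (filter_subset _ _)
  obtain ⟨a, haC', w, hw, hwC', haw⟩ := hC.exists_adj (hC'C.trans (subset_insert _ _)) hC'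
    (mem_insert_self _ _) fun h => hq (hC'C h)
  have hwC : w ∈ C := by
    rcases mem_insert.1 hw with rfl | h
    · exact absurd haw.symm (mem_filter.1 (hC'S haC')).2
    · exact h
  refine ⟨a, haC', w, hwC, hwC', haw, ?_⟩
  by_contra h
  exact hcut a haC' w (mem_sdiff.2 ⟨mem_filter.2 ⟨hwC, h⟩, hwC'⟩) haw

lemma hasEmptyBipartitePair_of_forall_exists_small (hS : 3 * t ≤ #S)
    (hsmall : ∀ Z ⊆ S, Z.Nonempty → G.Anticomplete Z (S \ Z) →
      ∃ Y ⊆ Z, Y.Nonempty ∧ G.Anticomplete Y (S \ Y) ∧ #Y < t) :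
    G.HasEmptyBipartitePair t := by
  classical
  obtain ⟨X, hX, hXmax⟩ := exists_max_image
    (S.powerset.filter fun X => #X ≤ 2 * t ∧ G.Anticomplete X (S \ X)) card
    ⟨∅, by simp [Anticomplete]⟩
  simp only [mem_filter, mem_powerset] at hX hXmax
  obtain ⟨hXS, hX2t, hXcut⟩ := hX
  have hcard : #(S \ X) = #S - #X := card_sdiff_of_subset hXS
  by_cases htX : t ≤ #X
  · exact ⟨X, S \ X, disjoint_sdiff, htX, by omega, hXcut⟩
  obtain ⟨Y, hYS, hYne, hYcut, hYt⟩ := hsmall (S \ X) sdiff_subset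
    (card_pos.1 (by omega)) (by rw [Finset.sdiff_sdiff_eq_self hXS]; exact hXcut.symm)
  have hXY : Disjoint X Y := disjoint_of_subset_right hYS disjoint_sdiff
  have := hXmax (X ∪ Y) ⟨union_subset hXS (hYS.trans sdiff_subset),
    by rw [card_union_of_disjoint hXY]; omega,
    (hXcut.mono subset_rfl (sdiff_subset_sdiff subset_rfl subset_union_left)).union_left
      (hYcut.mono subset_rfl (sdiff_subset_sdiff subset_rfl subset_union_right))⟩
  rw [card_union_of_disjoint hXY] at this
  have := hYne.card_pos
  omega

lemma exists_preconnectedOn_of_forall_large {Z : Finset V} (hZS : Z ⊆ S) (hZ : Z.Nonempty)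
    (hZcut : G.Anticomplete Z (S \ Z))
    (hlarge : ∀ Y ⊆ Z, Y.Nonempty → G.Anticomplete Y (S \ Y) → t ≤ #Y) :
    ∃ C ⊆ S, t ≤ #C ∧ G.Anticomplete C (S \ C) ∧ G.PreconnectedOn C := by
  classical
  obtain ⟨C, hC, hCmin⟩ := exists_min_image
    (Z.powerset.filter fun Y => Y.Nonempty ∧ G.Anticomplete Y (S \ Y)) card
    ⟨Z, by simpa using ⟨hZ, hZcut⟩⟩
  simp only [mem_filter, mem_powerset] at hC hCmin
  obtain ⟨hCZ, hCne, hCcut⟩ := hC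
  refine ⟨C, hCZ.trans hZS, hlarge C hCZ hCne hCcut, hCcut, fun A hAC hA => ?_⟩
  refine or_iff_not_imp_left.2 fun hne => eq_of_subset_of_card_le hAC ?_
  refine hCmin A ⟨hAC.trans hCZ, nonempty_iff_ne_empty.2 hne, fun a ha b hb => ?_⟩
  by_cases hbC : b ∈ C
  · exact hA a ha b (mem_sdiff.2 ⟨hbC, (mem_sdiff.1 hb).2⟩)
  · exact hCcut a (hAC ha) b (mem_sdiff.2 ⟨(mem_sdiff.1 hb).1, hbC⟩)

lemma hasEmptyBipartitePair_or_exists_large_component (hS : 3 * t ≤ #S) :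
    G.HasEmptyBipartitePair t ∨
      ∃ C ⊆ S, t ≤ #C ∧ G.Anticomplete C (S \ C) ∧ G.PreconnectedOn C := by
  by_cases hsmall : ∀ Z ⊆ S, Z.Nonempty → G.Anticomplete Z (S \ Z) →
      ∃ Y ⊆ Z, Y.Nonempty ∧ G.Anticomplete Y (S \ Y) ∧ #Y < t
  · exact Or.inl (hasEmptyBipartitePair_of_forall_exists_small hS hsmall)
  · push Not at hsmall
    obtain ⟨Z, hZS, hZ, hZcut, hlarge⟩ := hsmall
    exact Or.inr (exists_preconnectedOn_of_forall_large hZS hZ hZcut hlarge)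

end Cuts

section InducedPaths

variable {G : SimpleGraph V}

-- `p 0, …, p (m - 1)` is an induced copy of `pathGraph m`; the values of `p` from `m` on play
-- no role.
variable (G) in
def IsInducedPath (p : ℕ → V) (m : ℕ) : Prop :=
  Set.InjOn p (Set.Iio m) ∧ ∀ i < m, ∀ j < m, (G.Adj (p i) (p j) ↔ i + 1 = j ∨ j + 1 = i)

lemma cycleGraph_adj_iff_val {n : ℕ} {u w : Fin (n + 2)} :
    (cycleGraph (n + 2)).Adj u w ↔ u.val + 1 = w.val ∨ w.val + 1 = u.val ∨
      (u.val = 0 ∧ w.val = n + 1) ∨ (w.val = 0 ∧ u.val = n + 1) := by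
  rw [cycleGraph_adj, sub_eq_iff_eq_add', sub_eq_iff_eq_add', Fin.ext_iff, Fin.ext_iff,
    Fin.val_add_one, Fin.val_add_one]
  have := u.isLt
  have := w.isLt
  split_ifs with h1 h2 h2 <;> simp only [Fin.ext_iff, Fin.val_last] at h1 h2 <;> omega

lemma nonempty_cycleGraph_embedding_of_injOn {n : ℕ} {q : ℕ → V}
    (hinj : Set.InjOn q (Set.Iio (n + 2)))
    (hadj : ∀ i < n + 2, ∀ j < n + 2, G.Adj (q i) (q j) ↔ i + 1 = j ∨ j + 1 = i ∨
      (i = 0 ∧ j = n + 1) ∨ (j = 0 ∧ i = n + 1)) :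
    Nonempty (cycleGraph (n + 2) ↪g G) :=
  ⟨⟨⟨fun s => q s, fun a b hab => Fin.ext (hinj a.isLt b.isLt hab)⟩, fun {a b} => by
    rw [cycleGraph_adj_iff_val]
    exact hadj a a.isLt b b.isLt⟩⟩

lemma injOn_update_Iio {p : ℕ → V} {m : ℕ} (hp : Set.InjOn p (Set.Iio m)) {v : V}
    (hv : ∀ i < m, p i ≠ v) : Set.InjOn (Function.update p m v) (Set.Iio (m + 1)) := by
  intro a ha b hb hab
  simp only [Set.mem_Iio] at ha hb
  rcases Nat.lt_or_ge a m with ha' | ha' <;> rcases Nat.lt_or_ge b m with hb' | hb'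
  · rw [Function.update_of_ne (show a ≠ m by omega),
      Function.update_of_ne (show b ≠ m by omega)] at hab
    exact hp ha' hb' hab
  · rw [Function.update_of_ne (show a ≠ m by omega), show b = m by omega,
      Function.update_self] at hab
    exact absurd hab (hv a ha')
  · rw [Function.update_of_ne (show b ≠ m by omega), show a = m by omega,
      Function.update_self] at hab
    exact absurd hab.symm (hv b hb')
  · omega

namespace IsInducedPath

variable {p : ℕ → V} {m k : ℕ}

lemma mono (hp : G.IsInducedPath p m) {m' : ℕ} (h : m' ≤ m) : G.IsInducedPath p m' :=
  ⟨hp.1.mono fun _ hi => lt_of_lt_of_le hi h,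
    fun i hi j hj => hp.2 i (by omega) j (by omega)⟩

lemma shift (hp : G.IsInducedPath p m) {i L : ℕ} (h : i + L ≤ m) :
    G.IsInducedPath (fun l => p (i + l)) L := by
  refine ⟨fun a ha b hb hab => ?_, fun a ha b hb => ?_⟩
  · have := hp.1 (show i + a < m by simp at ha; omega) (show i + b < m by simp at hb; omega) hab
    omega
  · rw [hp.2 (i + a) (by omega) (i + b) (by omega)]
    omega

lemma snoc (hp : G.IsInducedPath p m) {v : V} (hv : ∀ i < m, p i ≠ v)
    (hadj : ∀ i < m, G.Adj (p i) v ↔ i + 1 = m) :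
    G.IsInducedPath (Function.update p m v) (m + 1) := by
  have hlt : ∀ i < m, Function.update p m v i = p i := fun i hi =>
    Function.update_of_ne (by omega) _ _
  refine ⟨injOn_update_Iio hp.1 hv, fun a ha b hb => ?_⟩
  rcases Nat.lt_or_ge a m with ha' | ha' <;> rcases Nat.lt_or_ge b m with hb' | hb'
  · rw [hlt a ha', hlt b hb', hp.2 a ha' b hb']
  · rw [hlt a ha', show b = m by omega, Function.update_self, hadj a ha']
    omega
  · rw [hlt b hb', show a = m by omega, Function.update_self, adj_comm, hadj b hb']
    omega
  · rw [show a = m by omega, show b = m by omega]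
    simp

lemma nonempty_cycleGraph_embedding (hp : G.IsInducedPath p m) (hm : 3 ≤ m) {v : V}
    (hv : ∀ i < m, p i ≠ v) (hadj : ∀ i < m, G.Adj (p i) v ↔ i = 0 ∨ i + 1 = m) :
    Nonempty (cycleGraph (m + 1) ↪g G) := by
  obtain ⟨n, rfl⟩ : ∃ n, m = n + 1 := ⟨m - 1, by omega⟩
  have hlt : ∀ i < n + 1, Function.update p (n + 1) v i = p i := fun i hi =>
    Function.update_of_ne (by omega) _ _
  refine nonempty_cycleGraph_embedding_of_injOn (injOn_update_Iio hp.1 hv) fun a ha b hb => ?_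
  rcases Nat.lt_or_ge a (n + 1) with ha' | ha' <;> rcases Nat.lt_or_ge b (n + 1) with hb' | hb'
  · rw [hlt a ha', hlt b hb', hp.2 a ha' b hb']
    omega
  · rw [hlt a ha', show b = n + 1 by omega, Function.update_self, hadj a ha']
    omega
  · rw [hlt b hb', show a = n + 1 by omega, Function.update_self, adj_comm, hadj b hb']
    omega
  · rw [show a = n + 1 by omega, show b = n + 1 by omega]
    simp

lemma add_two_le_of_gap (hp : G.IsInducedPath p m) (hk : 4 ≤ k)
    (hG : ∀ l, k ≤ l → IsEmpty (cycleGraph l ↪g G)) {v : V} {i j : ℕ} (hij : i < j) (hjm : j < m)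
    (hi : v = p i ∨ G.Adj (p i) v) (hj : v = p j ∨ G.Adj (p j) v)
    (hgap : ∀ l, i < l → l < j → ¬(v = p l ∨ G.Adj (p l) v)) : j + 2 ≤ i + k := by
  by_cases hv : ∃ c < m, p c = v
  · obtain ⟨c, hc, rfl⟩ := hv
    have hnear : ∀ l < m, (p c = p l ∨ G.Adj (p l) (p c)) → l ≤ c + 1 ∧ c ≤ l + 1 := by
      rintro l hl (h | h)
      · have := hp.1 hc hl h
        omega
      · have := (hp.2 l hl c hc).1 h
        omega
    have := hnear i (by omega) hi
    have := hnear j hjm hj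
    omega
  push Not at hv
  by_contra! hlong
  have hadj : ∀ l < j - i + 1, G.Adj (p (i + l)) v ↔ l = 0 ∨ l + 1 = j - i + 1 := by
    intro l hl
    rcases Nat.eq_zero_or_pos l with rfl | hl0
    · simpa [(hv i (by omega)).symm] using hi
    by_cases hlj : l = j - i
    · rw [hlj, show i + (j - i) = j by omega]
      simpa [(hv j hjm).symm] using hj
    · have := hgap (i + l) (by omega) (by omega)
      simp only [not_or] at this
      simp only [this.2, false_iff]
      omega
  obtain ⟨e⟩ := (hp.shift (i := i) (L := j - i + 1) (by omega)).nonempty_cycleGraph_embedding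
    (by omega) (fun l hl => hv _ (by omega)) hadj
  exact (hG _ (by omega)).false e

lemma exists_index_mem_window (hp : G.IsInducedPath p m) (hk : 4 ≤ k)
    (hG : ∀ l, k ≤ l → IsEmpty (cycleGraph l ↪g G)) {v : V} {i j a : ℕ} (hia : i ≤ a)
    (hi : v = p i ∨ G.Adj (p i) v) (haj : a < j) (hjm : j < m) (hj : v = p j ∨ G.Adj (p j) v) :
    ∃ l, a < l ∧ l ≤ j ∧ l + 2 ≤ a + k ∧ (v = p l ∨ G.Adj (p l) v) := by
  classical
  obtain ⟨i', j', hi'a, haj', hj'j, hi', hj', hgap⟩ :=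
    exists_consecutive_straddling (P := fun l => v = p l ∨ G.Adj (p l) v) hi hia hj haj
  exact ⟨j', haj', hj'j, (hp.add_two_le_of_gap hk hG (by omega) (by omega) hi' hj' hgap).trans
    (by omega), hj'⟩

end IsInducedPath

end InducedPaths

section PathNeighbourhoods

variable {G : SimpleGraph V} [Fintype V] [DecidableEq V] [DecidableRel G.Adj] {p : ℕ → V}
  {m k d : ℕ}

variable (G) in
def pathNbhd (p : ℕ → V) (s : Finset ℕ) : Finset V :=
  s.biUnion fun i => insert (p i) (G.neighborFinset (p i))

@[simp]
lemma mem_pathNbhd {s : Finset ℕ} {v : V} :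
    v ∈ G.pathNbhd p s ↔ ∃ i ∈ s, v = p i ∨ G.Adj (p i) v := by
  simp [pathNbhd]

lemma pathNbhd_mono {s s' : Finset ℕ} (h : s ⊆ s') : G.pathNbhd p s ⊆ G.pathNbhd p s' :=
  biUnion_subset_biUnion_of_subset_left _ h

lemma pathNbhd_union {s s' : Finset ℕ} :
    G.pathNbhd p (s ∪ s') = G.pathNbhd p s ∪ G.pathNbhd p s' :=
  union_biUnion

lemma pathNbhd_congr {p' : ℕ → V} {s : Finset ℕ} (h : ∀ i ∈ s, p i = p' i) :
    G.pathNbhd p s = G.pathNbhd p' s :=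
  biUnion_congr rfl fun i hi => by rw [h i hi]

lemma card_pathNbhd_le (hdeg : ∀ v, G.degree v ≤ d) (s : Finset ℕ) :
    #(G.pathNbhd p s) ≤ #s * (d + 1) := by
  refine card_biUnion_le.trans (sum_le_card_nsmul _ _ _ fun i _ => ?_)
  exact (card_insert_le _ _).trans (Nat.succ_le_succ ((card_neighborFinset_eq_degree ..).trans_le
    (hdeg _)))

lemma card_pathNbhd_range_add_le (hdeg : ∀ v, G.degree v ≤ d) (a L : ℕ) :
    #(G.pathNbhd p (range (a + L))) ≤ #(G.pathNbhd p (range a)) + L * (d + 1) := by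
  rw [range_eq_Ico, ← Ico_union_Ico_eq_Ico (Nat.zero_le a) (Nat.le_add_right a L), pathNbhd_union,
    ← range_eq_Ico]
  refine (card_union_le _ _).trans (Nat.add_le_add_left ?_ _)
  simpa using card_pathNbhd_le hdeg (p := p) (Ico a (a + L))

lemma IsInducedPath.anticomplete_window (hp : G.IsInducedPath p m) (hk : 4 ≤ k)
    (hG : ∀ l, k ≤ l → IsEmpty (cycleGraph l ↪g G)) {a : ℕ} :
    G.Anticomplete (G.pathNbhd p (range (a + 1)) \ G.pathNbhd p (Ico (a + 1) (a + k - 1)))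
      (G.pathNbhd p (range m) \ G.pathNbhd p (range (a + k - 1))) := by
  intro x hx y hy hxy
  simp only [mem_sdiff, mem_pathNbhd, mem_range, mem_Ico, not_exists, not_and] at hx hy
  obtain ⟨⟨i, hia, hi⟩, hxW⟩ := hx
  obtain ⟨⟨j, hjm, hj⟩, hyF⟩ := hy
  have hx_le : ∀ l < m, (x = p l ∨ G.Adj (p l) x) → l ≤ a := by
    intro l hl hxl
    by_contra! hal
    obtain ⟨l', hal', -, hl'k, hxl'⟩ :=
      hp.exists_index_mem_window hk hG (show i ≤ a by omega) hi hal hl hxl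
    exact hxW l' ⟨by omega, by omega⟩ hxl'
  have hy_off : ∀ c < m, p c ≠ y := by
    rintro c hc rfl
    have := hx_le c hc (Or.inr hxy.symm)
    exact hyF c (by omega) (Or.inl rfl)
  have hex : ∃ j, j < m ∧ (y = p j ∨ G.Adj (p j) y) := ⟨j, hjm, hj⟩
  obtain ⟨hj₀m, hj₀⟩ := Nat.find_spec hex
  set j₀ := Nat.find hex
  have hj₀a : a + k - 1 ≤ j₀ := by
    by_contra! h
    exact hyF j₀ h hj₀
  -- On the induced path `p 0, …, p j₀, y`, `x` dominates `p i` and `y` but none of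
  -- `p (a + 1), …, p j₀`.
  have hq := (hp.mono (show j₀ + 1 ≤ m by omega)).snoc (v := y) (fun l _ => hy_off l (by omega))
    fun l hl => ?_
  · obtain ⟨l, hal, -, hlk, hxl⟩ := hq.exists_index_mem_window hk hG (show i ≤ a by omega)
      (by rwa [Function.update_of_ne (show i ≠ j₀ + 1 by omega)]) (show a < j₀ + 1 by omega)
      (by omega) (by rw [Function.update_self]; exact Or.inr hxy.symm)
    rw [Function.update_of_ne (show l ≠ j₀ + 1 by omega)] at hxl
    have := hx_le l (by omega) hxl
    omega
  rcases Nat.lt_or_ge l j₀ with hl | hl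
  · have := Nat.find_min hex hl
    simp only [not_and, not_or] at this
    simp only [(this (by omega)).2, false_iff]
    omega
  · rw [show l = j₀ by omega]
    simpa [(hy_off j₀ hj₀m).symm] using hj₀

theorem hasEmptyBipartitePair_of_dominating_inducedPath (hk : 4 ≤ k)
    (hG : ∀ l, k ≤ l → IsEmpty (cycleGraph l ↪g G)) {t : ℕ} (hdeg : ∀ v, G.degree v ≤ d)
    (hp : G.IsInducedPath p m) (hdom : #(univ \ G.pathNbhd p (range m)) ≤ 4 * t)
    (hn : 10 * t + 2 * k * (d + 1) ≤ Fintype.card V) :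
    G.HasEmptyBipartitePair t := by
  set n := Fintype.card V
  have hkd : 0 < k * (d + 1) := by positivity
  rw [mul_assoc] at hn
  have hFm : n ≤ #(G.pathNbhd p (range m)) + 4 * t := by
    have := card_univ_sdiff (G.pathNbhd p (range m))
    have := card_le_univ (G.pathNbhd p (range m))
    omega
  obtain ⟨a, ha, ha1⟩ := Nat.exists_not_and_succ_of_not_zero_of_exists
    (p := fun j => n ≤ 2 * #(G.pathNbhd p (range j))) (by simp [pathNbhd]; omega) ⟨m, by omega⟩
  simp only [not_le] at ha ha1
  set W := G.pathNbhd p (Ico (a + 1) (a + k - 1))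
  have hW : #W ≤ (k - 2) * (d + 1) := by
    simpa [show a + k - 1 - (a + 1) = k - 2 by omega] using
      card_pathNbhd_le hdeg (p := p) (Ico (a + 1) (a + k - 1))
  have hF := card_pathNbhd_range_add_le hdeg (p := p) a (k - 1)
  rw [← Nat.add_sub_assoc (by omega)] at hF
  have hk₂ : (k - 2) * (d + 1) + 2 * (d + 1) = k * (d + 1) := by rw [← add_mul]; congr 1; omega
  have hk₁ : (k - 1) * (d + 1) + (d + 1) = k * (d + 1) := by rw [← add_one_mul]; congr 1; omega
  refine ⟨G.pathNbhd p (range (a + 1)) \ W,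
    G.pathNbhd p (range m) \ G.pathNbhd p (range (a + k - 1)), ?_, ?_, ?_,
    hp.anticomplete_window hk hG⟩
  · refine Finset.disjoint_left.2 fun v hv hv' => (mem_sdiff.1 hv').2 ?_
    exact pathNbhd_mono (range_subset_range.2 (by omega)) (mem_sdiff.1 hv).1
  · have := le_card_sdiff W (G.pathNbhd p (range (a + 1)))
    omega
  · have := le_card_sdiff (G.pathNbhd p (range (a + k - 1))) (G.pathNbhd p (range m))
    omega

end PathNeighbourhoods

section DominatingPath

variable {G : SimpleGraph V} [Fintype V] [DecidableEq V] [DecidableRel G.Adj] {t : ℕ}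

-- Invariant of the greedy construction: `C` is the reservoir into which the path `p 0, …, p m`
-- can still grow, and the vertices outside `C` and the path's closed neighbourhood are the ones
-- given up on.
variable (G) in
structure IsExtendablePath (t m : ℕ) (p : ℕ → V) (C : Finset V) : Prop where
  isInducedPath : G.IsInducedPath p (m + 1)
  disjoint : Disjoint C (G.pathNbhd p (range m))
  last_notMem : p m ∉ C
  preconnectedOn : G.PreconnectedOn (insert (p m) C)
  anticomplete_rest : G.Anticomplete (univ \ (G.pathNbhd p (range (m + 1)) ∪ C)) C
  card_rest_lt : #(univ \ (G.pathNbhd p (range (m + 1)) ∪ C)) < t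

lemma Connected.isExtendablePath (hG : G.Connected) (ht : 1 ≤ t) (v : V) :
    G.IsExtendablePath t 0 (fun _ => v) (univ.erase v) := by
  have hrest : univ \ (G.pathNbhd (fun _ => v) (range 1) ∪ univ.erase v) = ∅ := by
    ext u
    by_cases hu : u = v <;> simp [hu]
  refine ⟨⟨fun a ha b hb _ => ?_, fun i hi j hj => ?_⟩, by simp [pathNbhd], by simp,
    by simpa using hG.preconnectedOn_univ, ?_, by rw [hrest, card_empty]; omega⟩
  · simp only [Set.mem_Iio] at ha hb
    omega
  · simp [show i = 0 by omega, show j = 0 by omega]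
  · rw [hrest]
    exact fun a ha => absurd ha (notMem_empty a)

namespace IsExtendablePath

variable {m : ℕ} {p : ℕ → V} {C : Finset V}

lemma card_sdiff_pathNbhd_le (h : G.IsExtendablePath t m p C)
    (hS : #(C.filter fun v => ¬G.Adj (p m) v) < 3 * t) :
    #(univ \ G.pathNbhd p (range (m + 1))) ≤ 4 * t := by
  refine (card_le_card ?_).trans ((card_union_le _ _).trans (Nat.add_le_add h.card_rest_lt.le
    hS.le) |>.trans (by omega))
  intro v hv
  simp only [mem_sdiff, mem_univ, true_and, mem_union, mem_filter] at hv ⊢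
  by_cases hvC : v ∈ C
  · exact Or.inr ⟨hvC, fun h => hv (mem_pathNbhd.2 ⟨m, self_mem_range_succ m, Or.inr h⟩)⟩
  · exact Or.inl (not_or.2 ⟨hv, hvC⟩)

lemma isInducedPath_update (h : G.IsExtendablePath t m p C) {w : V} (hwC : w ∈ C)
    (hw : G.Adj (p m) w) : G.IsInducedPath (Function.update p (m + 1) w) (m + 2) := by
  have hwp : ∀ i < m, w ≠ p i ∧ ¬G.Adj (p i) w := fun i hi => not_or.1 fun hi' =>
    Finset.disjoint_left.1 h.disjoint hwC (mem_pathNbhd.2 ⟨i, mem_range.2 hi, hi'⟩)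
  refine h.isInducedPath.snoc (fun i hi => ?_) fun i hi => ?_
  · rcases Nat.lt_or_ge i m with hi' | hi'
    · exact (hwp i hi').1.symm
    · rw [show i = m by omega]
      exact fun hmw => h.last_notMem (hmw ▸ hwC)
  · rcases Nat.lt_or_ge i m with hi' | hi'
    · simp only [(hwp i hi').2, false_iff]
      omega
    · rw [show i = m by omega]
      simp [hw]

lemma disjoint_pathNbhd_succ (h : G.IsExtendablePath t m p C) {C' : Finset V}
    (hC' : C' ⊆ C.filter fun v => ¬G.Adj (p m) v) : Disjoint C' (G.pathNbhd p (range (m + 1))) := by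
  refine Finset.disjoint_left.2 fun v hv hv' => ?_
  obtain ⟨hvC, hmv⟩ := mem_filter.1 (hC' hv)
  obtain ⟨i, hi, hvi⟩ := mem_pathNbhd.1 hv'
  rcases Nat.lt_or_ge i m with hi' | hi'
  · exact Finset.disjoint_left.1 h.disjoint hvC (mem_pathNbhd.2 ⟨i, mem_range.2 hi', hvi⟩)
  · rw [show i = m by simp at hi; omega] at hvi
    rcases hvi with rfl | hvi
    exacts [h.last_notMem hvC, hmv hvi]

lemma step (h : G.IsExtendablePath t m p C) (ht : 1 ≤ t)
    (hS : 3 * t ≤ #(C.filter fun v => ¬G.Adj (p m) v)) :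
    G.HasEmptyBipartitePair t ∨
      ∃ w, ∃ C' ⊂ C, G.IsExtendablePath t (m + 1) (Function.update p (m + 1) w) C' := by
  set S := C.filter fun v => ¬G.Adj (p m) v
  have hSC : S ⊆ C := filter_subset _ _
  obtain hpair | ⟨C', hC'S, htC', hC'cut, hC'⟩ :=
    hasEmptyBipartitePair_or_exists_large_component (G := G) hS
  · exact Or.inl hpair
  obtain ⟨a, haC', w, hwC, hwC', haw, hmw⟩ := h.preconnectedOn.exists_adj_of_anticomplete
    h.last_notMem hC'S (card_pos.1 (by omega)) hC'cut
  set p' := Function.update p (m + 1) w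
  have hnbhd : G.pathNbhd p' (range (m + 1)) = G.pathNbhd p (range (m + 1)) :=
    pathNbhd_congr fun i hi => Function.update_of_ne (by simp at hi; omega) _ _
  set R' := univ \ (G.pathNbhd p' (range (m + 2)) ∪ C')
  have hR' : R' ⊆ univ \ (G.pathNbhd p (range (m + 1)) ∪ C) ∪ (S \ C') := by
    intro v hv
    simp only [mem_sdiff, mem_univ, true_and, mem_union, not_or, R', S, mem_filter] at hv ⊢
    have hv₁ : v ∉ G.pathNbhd p (range (m + 1)) :=
      fun h => hv.1 (pathNbhd_mono (range_subset_range.2 (by omega)) (hnbhd ▸ h))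
    by_cases hvC : v ∈ C
    · exact Or.inr ⟨⟨hvC, fun h => hv₁ (mem_pathNbhd.2 ⟨m, self_mem_range_succ m, Or.inr h⟩)⟩,
        hv.2⟩
    · exact Or.inl ⟨hv₁, hvC⟩
  have hR'cut : G.Anticomplete R' C' :=
    ((h.anticomplete_rest.mono subset_rfl (hC'S.trans hSC)).union_left hC'cut.symm).mono hR'
      subset_rfl
  by_cases htR' : t ≤ #R'
  · refine Or.inl ⟨R', C', Finset.disjoint_left.2 fun v hv hv' => ?_, htR', htC', hR'cut⟩
    exact (mem_sdiff.1 hv).2 (mem_union_right _ hv')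
  refine Or.inr ⟨w, C', ⟨hC'S.trans hSC, fun h => hwC' (h hwC)⟩, h.isInducedPath_update hwC hmw,
    hnbhd ▸ h.disjoint_pathNbhd_succ hC'S, by simpa [p'] using hwC',
    by simpa [p'] using hC'.insert_of_adj haC' haw.symm, hR'cut, not_le.1 htR'⟩

theorem hasEmptyBipartitePair_or_exists_dominating {m : ℕ} {p : ℕ → V} {C : Finset V}
    (h : G.IsExtendablePath t m p C) (ht : 1 ≤ t) :
    G.HasEmptyBipartitePair t ∨
      ∃ m p, G.IsInducedPath p m ∧ #(univ \ G.pathNbhd p (range m)) ≤ 4 * t := by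
  by_cases hS : #(C.filter fun v => ¬G.Adj (p m) v) < 3 * t
  · exact Or.inr ⟨m + 1, p, h.isInducedPath, h.card_sdiff_pathNbhd_le hS⟩
  obtain hpair | ⟨w, C', hC'C, h'⟩ := h.step ht (by omega)
  · exact Or.inl hpair
  · exact h'.hasEmptyBipartitePair_or_exists_dominating ht
termination_by #C
decreasing_by exact card_lt_card hC'C

end IsExtendablePath

theorem Connected.hasEmptyBipartitePair (hG : G.Connected) {k d : ℕ} (hk : 4 ≤ k)
    (hholes : ∀ l, k ≤ l → IsEmpty (cycleGraph l ↪g G)) (hdeg : ∀ v, G.degree v ≤ d)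
    (ht : 1 ≤ t) (hn : 10 * t + 2 * k * (d + 1) ≤ Fintype.card V) :
    G.HasEmptyBipartitePair t := by
  obtain h | ⟨m, p, hp, hdom⟩ :=
    (hG.isExtendablePath ht hG.nonempty.some).hasEmptyBipartitePair_or_exists_dominating ht
  · exact h
  · exact hasEmptyBipartitePair_of_dominating_inducedPath hk hholes hdeg hp hdom hn

end DominatingPath

end SimpleGraph

/-- For every `k ≥ 4` there are `ε > 0`, `c > 0` and `N` such that
every connected graph `G` on `n ≥ N` vertices with no induced cycle of length at
least `k` and maximum degree at most `εn` contains two disjoint vertex sets `X`, `Y`,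
each of size at least `cn`, with no edge between them. -/
theorem stmt19 (k : ℕ) (hk : 4 ≤ k) :
    ∃ ε : ℝ, 0 < ε ∧ ∃ c : ℝ, 0 < c ∧ ∃ N : ℕ,
      ∀ (V : Type) [Fintype V] [DecidableEq V] (G : SimpleGraph V)
        [DecidableRel G.Adj] (n : ℕ), Fintype.card V = n → N ≤ n →
        G.Connected →
        (∀ l, k ≤ l → IsEmpty (SimpleGraph.cycleGraph l ↪g G)) →
        (∀ v : V, (G.degree v : ℝ) ≤ ε * n) →
        ∃ X Y : Finset V, Disjoint X Y ∧
          c * n ≤ (X.card : ℝ) ∧ c * n ≤ (Y.card : ℝ) ∧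
          ∀ x ∈ X, ∀ y ∈ Y, ¬ G.Adj x y := by
  -- With `d = n / (4k)` and `t = n / 40`, the budget `10t + 2k(d + 1) ≤ n` holds once `n ≥ 8k`.
  refine ⟨1 / (4 * k), by positivity, 1 / 80, by norm_num, 80 * k, ?_⟩
  intro V _ _ G _ n hn hNn hG hholes hdeg
  have hdeg' : ∀ v, G.degree v ≤ n / (4 * k) := fun v => by
    have := hdeg v
    rw [one_div, le_inv_mul_iff₀ (by positivity)] at this
    rw [Nat.le_div_iff_mul_le (by omega), mul_comm]
    exact_mod_cast this
  obtain ⟨X, Y, hXY, hX, hY, hcut⟩ := hG.hasEmptyBipartitePair (t := n / 40) hk hholes hdeg'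
    (by omega) (by
      have := Nat.div_mul_le_self n (4 * k)
      have : 2 * k * (n / (4 * k) + 1) = 2 * (n / (4 * k) * k) + 2 * k := by ring
      have : n / (4 * k) * (4 * k) = 4 * (n / (4 * k) * k) := by ring
      omega)
  have hc : (1 / 80 : ℝ) * n ≤ (n / 40 : ℕ) := by
    have : (n : ℝ) ≤ 80 * (n / 40 : ℕ) := by exact_mod_cast (show n ≤ 80 * (n / 40) by omega)
    linarith
  exact ⟨X, Y, hXY, hc.trans (by exact_mod_cast hX), hc.trans (by exact_mod_cast hY), hcut⟩
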